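/- Let ρ be a bounded linear operator on H with ‖ρ^p‖_∞ ≤ a·b^p for some a > 0, b ∈ [0,1) and all p, let (ε_n)_{n∈ℤ} be a strong H-white noise, and let X_n = Σ_{j=0}^∞ ρ^j(ε_{n−j}) be the stationary ARH(1) process. Let Γ = E(X_0 ⊗ X_0) and Γ_ε = E(ε_0 ⊗ ε_0). Then the covariance operator satisfies Γ = ρ ∘ Γ ∘ ρ* + Γ_ε. -/

import Mathlib

/-!
Since `‖ρ ^ j‖ ≤ a * b ^ j` is summable, the series `X 0 = ∑ ρ ^ j ε (-j)` converges in `L²`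
and not only almost surely, so `Γ` is the weak limit of the covariance operators of its partial
sums. The noise is independent and centered, so the cross terms vanish and the `m`-th partial sum
has covariance `P m = ∑_{j<m} ρ ^ j Γε ρ*^j`. Since `P (m + 1) = Γε + ρ P m ρ*`, letting `m → ∞`
gives `Γ = ρ Γ ρ* + Γε`.
-/

open MeasureTheory ProbabilityTheory Filter Topology
open scoped InnerProductSpace

noncomputable section

variable {Ω : Type*} [MeasureSpace Ω] [IsProbabilityMeasure (ℙ : Measure Ω)]
variable {H : Type*} [NormedAddCommGroup H] [InnerProductSpace ℝ H] [CompleteSpace H]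
  [SecondCountableTopology H] [MeasurableSpace H] [BorelSpace H]

/-- A strong `H`-white noise: a sequence of i.i.d. centered random elements of `H`
with finite strong second moment. -/
structure IsStrongWhiteNoise (ε : ℤ → Ω → H) : Prop where
  meas : ∀ k, Measurable (ε k)
  indep : iIndepFun ε ℙ
  ident : ∀ k, Measure.map (ε k) ℙ = Measure.map (ε 0) ℙ
  centered : ∫ ω, ε 0 ω ∂ℙ = 0
  sqInt : MemLp (ε 0) 2 ℙ

open Finset
open scoped ENNReal

section SeriesInLp

variable {α E : Type*} [MeasurableSpace α] {μ : Measure α} [NormedAddCommGroup E]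
  {p : ℝ≥0∞} {f : ℕ → α → E} {F : α → E}

theorem eLpNorm_sum_range_sub_le_tsum (hp : 1 ≤ p) (hf : ∀ j, AEStronglyMeasurable (f j) μ)
    (hF : ∀ᵐ a ∂μ, Tendsto (fun m => ∑ j ∈ range m, f j a) atTop (𝓝 (F a))) (n : ℕ) :
    eLpNorm ((∑ j ∈ range n, f j) - F) p μ ≤ ∑' k, eLpNorm (f (k + n)) p μ := by
  have htail : ∀ m, n ≤ m → eLpNorm ((∑ j ∈ range n, f j) - ∑ j ∈ range m, f j) p μ
      ≤ ∑' k, eLpNorm (f (k + n)) p μ := by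
    intro m hnm
    rw [← sum_range_add_sum_Ico _ hnm, sub_add_cancel_left, eLpNorm_neg, sum_Ico_eq_sum_range]
    calc _ ≤ ∑ k ∈ range (m - n), eLpNorm (f (n + k)) p μ := eLpNorm_sum_le (fun k _ => hf _) hp
      _ ≤ _ := by simp_rw [add_comm n]; exact ENNReal.sum_le_tsum _
  refine (Lp.eLpNorm_lim_le_liminf_eLpNorm (fun m => ?_) _ ?_).trans
    (liminf_le_of_frequently_le' (eventually_atTop.2 ⟨n, htail⟩).frequently)
  · exact (Finset.aestronglyMeasurable_sum _ fun j _ => hf j).sub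
      (Finset.aestronglyMeasurable_sum _ fun j _ => hf j)
  · filter_upwards [hF] with a ha
    simpa [Finset.sum_apply] using ha.const_sub (∑ j ∈ range n, f j a)

theorem memLp_of_tendsto_sum_range (hp : 1 ≤ p) (hf : ∀ j, AEStronglyMeasurable (f j) μ)
    (hsum : ∑' j, eLpNorm (f j) p μ ≠ ∞)
    (hF : ∀ᵐ a ∂μ, Tendsto (fun m => ∑ j ∈ range m, f j a) atTop (𝓝 (F a))) :
    MemLp F p μ := by
  refine ⟨aestronglyMeasurable_of_tendsto_ae atTop
    (fun m => Finset.aestronglyMeasurable_fun_sum _ fun j _ => hf j) hF, ?_⟩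
  simpa [eLpNorm_neg] using (eLpNorm_sum_range_sub_le_tsum hp hf hF 0).trans_lt hsum.lt_top

theorem tendsto_eLpNorm_sum_range_sub (hp : 1 ≤ p) (hf : ∀ j, AEStronglyMeasurable (f j) μ)
    (hsum : ∑' j, eLpNorm (f j) p μ ≠ ∞)
    (hF : ∀ᵐ a ∂μ, Tendsto (fun m => ∑ j ∈ range m, f j a) atTop (𝓝 (F a))) :
    Tendsto (fun n => eLpNorm ((∑ j ∈ range n, f j) - F) p μ) atTop (𝓝 0) :=
  tendsto_of_tendsto_of_tendsto_of_le_of_le tendsto_const_nhds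
    (ENNReal.tendsto_sum_nat_add _ hsum) (fun _ => zero_le)
    (eLpNorm_sum_range_sub_le_tsum hp hf hF)

end SeriesInLp

section Covariance

variable {α E : Type*} [MeasurableSpace α] {μ : Measure α}
  [NormedAddCommGroup E] [InnerProductSpace ℝ E]

/-- `covForm μ Z x y = ⟪E(Z ⊗ Z) x, y⟫`. -/
def covForm (μ : Measure α) (Z : α → E) (x y : E) : ℝ :=
  ∫ a, ⟪Z a, x⟫_ℝ * ⟪Z a, y⟫_ℝ ∂μ

theorem integral_mul_eq_inner_toLp {f g : α → ℝ} (hf : MemLp f 2 μ) (hg : MemLp g 2 μ) :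
    ∫ a, f a * g a ∂μ = ⟪hf.toLp f, hg.toLp g⟫_ℝ := by
  rw [L2.inner_def]
  refine integral_congr_ae ?_
  filter_upwards [hf.coeFn_toLp, hg.coeFn_toLp] with a hfa hga
  simp [hfa, hga, mul_comm]

theorem tendsto_integral_mul_of_tendsto_eLpNorm {f g : ℕ → α → ℝ} {F G : α → ℝ}
    (hf : ∀ n, MemLp (f n) 2 μ) (hg : ∀ n, MemLp (g n) 2 μ) (hF : MemLp F 2 μ) (hG : MemLp G 2 μ)
    (hfF : Tendsto (fun n => eLpNorm (f n - F) 2 μ) atTop (𝓝 0))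
    (hgG : Tendsto (fun n => eLpNorm (g n - G) 2 μ) atTop (𝓝 0)) :
    Tendsto (fun n => ∫ a, f n a * g n a ∂μ) atTop (𝓝 (∫ a, F a * G a ∂μ)) := by
  simp_rw [integral_mul_eq_inner_toLp (hf _) (hg _), integral_mul_eq_inner_toLp hF hG]
  exact ((Lp.tendsto_Lp_iff_tendsto_eLpNorm'' f hf F hF).2 hfF).inner
    ((Lp.tendsto_Lp_iff_tendsto_eLpNorm'' g hg G hG).2 hgG)

theorem tendsto_eLpNorm_inner_const_sub {Z : ℕ → α → E} {Y : α → E}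
    (hZ : Tendsto (fun n => eLpNorm (Z n - Y) 2 μ) atTop (𝓝 0)) (x : E) :
    Tendsto (fun n => eLpNorm ((fun a => ⟪Z n a, x⟫_ℝ) - fun a => ⟪Y a, x⟫_ℝ) 2 μ) atTop (𝓝 0) := by
  have hle : ∀ n, eLpNorm ((fun a => ⟪Z n a, x⟫_ℝ) - fun a => ⟪Y a, x⟫_ℝ) 2 μ
      ≤ ‖x‖₊ * eLpNorm (Z n - Y) 2 μ := fun n => by
    refine (eLpNorm_le_nnreal_smul_eLpNorm_of_ae_le_mul (.of_forall fun a => ?_) 2).trans_eq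
      (ENNReal.smul_def _ _)
    rw [mul_comm, Pi.sub_apply, ← inner_sub_left]
    exact nnnorm_inner_le_nnnorm _ _
  have := ENNReal.Tendsto.const_mul hZ (.inr ENNReal.coe_ne_top) (a := ‖x‖₊)
  rw [mul_zero] at this
  exact tendsto_of_tendsto_of_tendsto_of_le_of_le tendsto_const_nhds this (fun _ => zero_le) hle

theorem tendsto_covForm_of_tendsto_eLpNorm {Z : ℕ → α → E} {Y : α → E}
    (hZ : ∀ n, MemLp (Z n) 2 μ) (hY : MemLp Y 2 μ)
    (hZY : Tendsto (fun n => eLpNorm (Z n - Y) 2 μ) atTop (𝓝 0)) (x y : E) :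
    Tendsto (fun n => covForm μ (Z n) x y) atTop (𝓝 (covForm μ Y x y)) :=
  tendsto_integral_mul_of_tendsto_eLpNorm (fun n => (hZ n).inner_const x)
    (fun n => (hZ n).inner_const y) (hY.inner_const x) (hY.inner_const y)
    (tendsto_eLpNorm_inner_const_sub hZY x) (tendsto_eLpNorm_inner_const_sub hZY y)

end Covariance

open ContinuousLinearMap (adjoint adjoint_inner_right)

namespace IsStrongWhiteNoise

variable {α E : Type*} [MeasureSpace α] [NormedAddCommGroup E] [InnerProductSpace ℝ E]
  [MeasurableSpace E] {ε : ℤ → α → E}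

theorem identDistrib (hε : IsStrongWhiteNoise ε) (k : ℤ) : IdentDistrib (ε k) (ε 0) ℙ ℙ :=
  ⟨(hε.meas k).aemeasurable, (hε.meas 0).aemeasurable, hε.ident k⟩

theorem memLp [BorelSpace E] (hε : IsStrongWhiteNoise ε) (k : ℤ) : MemLp (ε k) 2 ℙ :=
  (hε.identDistrib k).symm.memLp_snd hε.sqInt

theorem covForm_eq [BorelSpace E] (hε : IsStrongWhiteNoise ε) (k : ℤ) :
    covForm ℙ (ε k) = covForm ℙ (ε 0) := by
  ext x y
  exact ((hε.identDistrib k).comp (u := fun v : E => ⟪v, x⟫_ℝ * ⟪v, y⟫_ℝ)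
    (by fun_prop)).integral_eq

variable [IsProbabilityMeasure (ℙ : Measure α)] [BorelSpace E] [CompleteSpace E]

theorem integral_inner_eq_zero (hε : IsStrongWhiteNoise ε) (k : ℤ) (x : E) :
    ∫ ω, ⟪ε k ω, x⟫_ℝ ∂ℙ = 0 := by
  simp_rw [real_inner_comm x]
  rw [integral_inner ((hε.memLp k).integrable one_le_two), (hε.identDistrib k).integral_eq,
    hε.centered, inner_zero_right]

theorem integral_inner_mul_inner_of_ne (hε : IsStrongWhiteNoise ε) {j k : ℤ} (hjk : j ≠ k)
    (x y : E) : ∫ ω, ⟪ε j ω, x⟫_ℝ * ⟪ε k ω, y⟫_ℝ ∂ℙ = 0 := by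
  have hinner : ∀ z : E, Measurable fun v : E => ⟪v, z⟫_ℝ := fun z =>
    (continuous_id.inner continuous_const).measurable
  have hind : IndepFun (fun ω => ⟪ε j ω, x⟫_ℝ) (fun ω => ⟪ε k ω, y⟫_ℝ) ℙ :=
    (hε.indep.indepFun hjk).comp (hinner x) (hinner y)
  rw [hind.integral_fun_mul_eq_mul_integral ((hinner x).comp (hε.meas j)).aestronglyMeasurable
    ((hinner y).comp (hε.meas k)).aestronglyMeasurable, hε.integral_inner_eq_zero, zero_mul]

/-- A filter with distinct lags decorrelates the noise: only the diagonal terms survive. -/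
theorem covForm_sum (hε : IsStrongWhiteNoise ε) {ι : Type*} (s : Finset ι) {κ : ι → ℤ}
    (hκ : Set.InjOn κ s) (T : ι → E →L[ℝ] E) (x y : E) :
    covForm ℙ (fun ω => ∑ j ∈ s, T j (ε (κ j) ω)) x y
      = ∑ j ∈ s, covForm ℙ (ε 0) (adjoint (T j) x) (adjoint (T j) y) := by
  have hint : ∀ j k, Integrable
      (fun ω => ⟪ε (κ j) ω, adjoint (T j) x⟫_ℝ * ⟪ε (κ k) ω, adjoint (T k) y⟫_ℝ) ℙ :=
    fun j k => ((hε.memLp _).inner_const _).integrable_mul ((hε.memLp _).inner_const _)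
  calc covForm ℙ (fun ω => ∑ j ∈ s, T j (ε (κ j) ω)) x y
      = ∑ j ∈ s, ∑ k ∈ s,
          ∫ ω, ⟪ε (κ j) ω, adjoint (T j) x⟫_ℝ * ⟪ε (κ k) ω, adjoint (T k) y⟫_ℝ ∂ℙ := by
        simp_rw [covForm, sum_inner, ← adjoint_inner_right, sum_mul_sum]
        rw [integral_finsetSum _ fun j _ => integrable_finsetSum _ fun k _ => hint j k]
        exact sum_congr rfl fun j _ => integral_finsetSum _ fun k _ => hint j k
    _ = ∑ j ∈ s, covForm ℙ (ε (κ j)) (adjoint (T j) x) (adjoint (T j) y) :=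
        sum_congr rfl fun j hj => sum_eq_single_of_mem j hj fun k hk hkj =>
          hε.integral_inner_mul_inner_of_ne (hκ.ne hj hk hkj.symm) _ _
    _ = ∑ j ∈ s, covForm ℙ (ε 0) (adjoint (T j) x) (adjoint (T j) y) := by
        simp_rw [hε.covForm_eq]

theorem tendsto_covForm_linearProcess (hε : IsStrongWhiteNoise ε) {T : ℕ → E →L[ℝ] E}
    (hT : Summable fun j => ‖T j‖) {n : ℤ} {Y : α → E}
    (hY : ∀ᵐ ω ∂ℙ, Tendsto (fun m => ∑ j ∈ range m, T j (ε (n - j) ω)) atTop (𝓝 (Y ω)))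
    (x y : E) :
    Tendsto (fun m => ∑ j ∈ range m, covForm ℙ (ε 0) (adjoint (T j) x) (adjoint (T j) y))
      atTop (𝓝 (covForm ℙ Y x y)) := by
  set f : ℕ → α → E := fun j ω => T j (ε (n - j) ω)
  have hf : ∀ j, MemLp (f j) 2 ℙ := fun j => (T j).comp_memLp' (hε.memLp _)
  have hnorm : ∀ j, eLpNorm (f j) 2 ℙ ≤ ‖T j‖₊ * eLpNorm (ε 0) 2 ℙ := fun j => by
    rw [← (hε.identDistrib (n - j)).eLpNorm_eq]
    exact (eLpNorm_le_nnreal_smul_eLpNorm_of_ae_le_mul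
      (.of_forall fun ω => (T j).le_opNNNorm _) 2).trans_eq (ENNReal.smul_def _ _)
  have hsum : ∑' j, eLpNorm (f j) 2 ℙ ≠ ∞ := by
    refine ne_top_of_le_ne_top ?_ (ENNReal.tsum_le_tsum hnorm)
    rw [ENNReal.tsum_mul_right]
    exact ENNReal.mul_ne_top (ENNReal.tsum_coe_ne_top_iff_summable.2 (NNReal.summable_coe.1 hT))
      hε.sqInt.eLpNorm_ne_top
  have hY' : ∀ᵐ ω ∂ℙ, Tendsto (fun m => ∑ j ∈ range m, f j ω) atTop (𝓝 (Y ω)) := hY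
  have hmem : MemLp Y 2 ℙ := memLp_of_tendsto_sum_range one_le_two (fun j => (hf j).1) hsum hY'
  have hlim : Tendsto (fun m => eLpNorm ((∑ j ∈ range m, f j) - Y) 2 ℙ) atTop (𝓝 0) :=
    tendsto_eLpNorm_sum_range_sub one_le_two (fun j => (hf j).1) hsum hY'
  have hL2 := tendsto_covForm_of_tendsto_eLpNorm (Z := fun m => ∑ j ∈ range m, f j)
    (fun m => memLp_finsetSum' _ fun j _ => hf j) hmem hlim x y
  have hinj : ∀ m, Set.InjOn (fun j : ℕ => n - j) (range m) := fun m j _ k _ h => by simpa using h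
  refine hL2.congr fun m => ?_
  rw [sum_fn]
  exact hε.covForm_sum _ (hinj m) T x y

end IsStrongWhiteNoise

theorem sum_range_succ_pow_mul_mul_star_pow {R : Type*} [Semiring R] [StarMul R] (r a : R)
    (m : ℕ) :
    ∑ j ∈ range (m + 1), r ^ j * a * star (r ^ j)
      = r * (∑ j ∈ range m, r ^ j * a * star (r ^ j)) * star r + a := by
  simp only [sum_range_succ', pow_zero, one_mul, star_one, mul_one, mul_sum, sum_mul, pow_succ',
    star_mul, mul_assoc]

theorem eq_comp_comp_adjoint_add_of_tendsto_inner {E : Type*} [NormedAddCommGroup E]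
    [InnerProductSpace ℝ E] [CompleteSpace E] {P : ℕ → E →L[ℝ] E} {Γ A ρ : E →L[ℝ] E}
    (hP : ∀ x y, Tendsto (fun m => ⟪P m x, y⟫_ℝ) atTop (𝓝 ⟪Γ x, y⟫_ℝ))
    (hrec : ∀ m, P (m + 1) = ρ ∘L P m ∘L adjoint ρ + A) :
    Γ = ρ ∘L Γ ∘L adjoint ρ + A := by
  ext x
  refine ext_inner_right ℝ fun y =>
    tendsto_nhds_unique ((hP x y).comp (tendsto_add_atTop_nat 1)) ?_
  simp only [Function.comp_def, hrec, add_apply, ContinuousLinearMap.comp_apply, inner_add_left,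
    ← adjoint_inner_right ρ]
  exact (hP _ _).add_const _

theorem arh1_covariance_equation_general
    (ρ : H →L[ℝ] H) (a b : ℝ) (hb : b ∈ Set.Ico (0 : ℝ) 1)
    (hρ : ∀ p : ℕ, ‖ρ ^ p‖ ≤ a * b ^ p)
    (ε : ℤ → Ω → H) (hε : IsStrongWhiteNoise ε)
    (X : ℤ → Ω → H)
    (hX : ∀ n : ℤ, ∀ᵐ ω ∂ℙ,
      Tendsto (fun m : ℕ => ∑ j ∈ Finset.range (m + 1), (ρ ^ j) (ε (n - j) ω))
        atTop (𝓝 (X n ω)))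
    (Γ : H →L[ℝ] H)
    (hΓ : ∀ x y : H, ⟪Γ x, y⟫_ℝ = ∫ ω, ⟪X 0 ω, x⟫_ℝ * ⟪X 0 ω, y⟫_ℝ ∂ℙ)
    (Γε : H →L[ℝ] H)
    (hΓε : ∀ x y : H, ⟪Γε x, y⟫_ℝ = ∫ ω, ⟪ε 0 ω, x⟫_ℝ * ⟪ε 0 ω, y⟫_ℝ ∂ℙ) :
    Γ = ρ ∘L Γ ∘L ContinuousLinearMap.adjoint ρ + Γε := by
  have hsumm : Summable fun j => ‖ρ ^ j‖ := .of_nonneg_of_le (fun _ => norm_nonneg _) hρ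
    ((summable_geometric_of_lt_one hb.1 hb.2).mul_left a)
  -- the covariance operators of the partial sums of the series for `X 0`
  set P : ℕ → H →L[ℝ] H := fun m => ∑ j ∈ range m, ρ ^ j * Γε * adjoint (ρ ^ j)
  refine eq_comp_comp_adjoint_add_of_tendsto_inner (P := P) (fun x y => ?_) fun m => ?_
  · have hX0 : ∀ᵐ ω ∂ℙ, Tendsto (fun m => ∑ j ∈ range m, (ρ ^ j) (ε (0 - j) ω)) atTop
        (𝓝 (X 0 ω)) := by
      filter_upwards [hX 0] with ω hω
      exact (tendsto_add_atTop_iff_nat 1).1 hω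
    rw [hΓ]
    refine (hε.tendsto_covForm_linearProcess hsumm hX0 x y).congr fun m => ?_
    rw [_root_.sum_apply, sum_inner]
    refine sum_congr rfl fun j _ => ?_
    rw [covForm, ← hΓε, adjoint_inner_right, mul_apply_eq_comp, mul_apply_eq_comp]
  · simp only [P, ← ContinuousLinearMap.star_eq_adjoint]
    exact sum_range_succ_pow_mul_mul_star_pow ρ Γε m

/-- the covariance operator of the stationary ARH(1) process satisfies
`Γ = ρ Γ ρ* + Γ_ε`. -/
theorem arh1_covariance_equation
    (ρ : H →L[ℝ] H) (a b : ℝ) (ha : 0 < a) (hb : b ∈ Set.Ico (0 : ℝ) 1)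
    (hρ : ∀ p : ℕ, ‖ρ ^ p‖ ≤ a * b ^ p)
    (ε : ℤ → Ω → H) (hε : IsStrongWhiteNoise ε)
    (X : ℤ → Ω → H) (hXmeas : ∀ n, Measurable (X n))
    (hX : ∀ n : ℤ, ∀ᵐ ω ∂ℙ,
      Tendsto (fun m : ℕ => ∑ j ∈ Finset.range (m + 1), (ρ ^ j) (ε (n - j) ω))
        atTop (𝓝 (X n ω)))
    (hAR : ∀ n : ℤ, ∀ᵐ ω ∂ℙ, X n ω = ρ (X (n - 1) ω) + ε n ω)
    (hX2 : MemLp (X 0) 2 ℙ)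
    (Γ : H →L[ℝ] H)
    (hΓ : ∀ x y : H, ⟪Γ x, y⟫_ℝ = ∫ ω, ⟪X 0 ω, x⟫_ℝ * ⟪X 0 ω, y⟫_ℝ ∂ℙ)
    (Γε : H →L[ℝ] H)
    (hΓε : ∀ x y : H, ⟪Γε x, y⟫_ℝ = ∫ ω, ⟪ε 0 ω, x⟫_ℝ * ⟪ε 0 ω, y⟫_ℝ ∂ℙ) :
    Γ = ρ ∘L Γ ∘L ContinuousLinearMap.adjoint ρ + Γε :=
  arh1_covariance_equation_general ρ a b hb hρ ε hε X hX Γ hΓ Γε hΓε
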